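/- arXiv:1805.04305 — 2 statements merged into one kernel-verified Lean document; each statement's English description precedes it below -/
import Mathlib

section
/- For a general force g (not necessarily linear) and filters satisfying ψ₁ = sinc · φ, one step of the trigonometric integrator satisfies the identity ℋ(q_{n+1}, q̇_{n+1}) + (1/2) Re((Φ q_n)^* g(Φ q_{n+1})) = ℋ(q_n, q̇_n) + (1/2) Re((Φ q_{n+1})^* g(Φ q_n)), where ℋ(q, q̇) = (1/2)‖Ω q‖² + (1/2)‖q̇‖² − (1/2) Re((cos(hΩ) Φ q)^* g(Φ q)) − (1/8) h² ‖Ψ₁ g(Φ q)‖². -/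
/-!
Everything in the step acts diagonally except the force, so ℋ and the two cross terms split into
sums over the coordinates, and it suffices to prove the identity for one mode, where the force
values `G = g(Φqₙ)ᵢ` and `K = g(Φqₙ₊₁)ᵢ` can be treated as arbitrary independent vectors of a
real inner product space. Substituting the step and expanding all inner products, the difference
of the two sides is a multiple of `cos² + sin² - 1`, once `sin(hω) = hω·sinc(hω)` and
`ψ₁ = sinc·φ` are used.
-/

open scoped BigOperators

/-- `sinc ξ = sin ξ / ξ` with `sinc 0 = 1`. -/
noncomputable def sinc (x : ℝ) : ℝ := if x = 0 then 1 else Real.sin x / x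

/-- Entrywise (diagonal-matrix) action of a real function family on `ℂ^d`. -/
noncomputable def dOp {d : ℕ} (f : Fin d → ℝ) (q : EuclideanSpace ℂ (Fin d)) :
    EuclideanSpace ℂ (Fin d) := WithLp.toLp 2 (fun i => (f i : ℂ) * q i)

/-- Modified energy for a general force `g`:
`ℋ(q,q̇) = ½‖Ωq‖² + ½‖q̇‖² − ½ Re((cos(hΩ)Φq)* g(Φq)) − ⅛h²‖Ψ₁ g(Φq)‖²`. -/
noncomputable def modEnergyG {d : ℕ} (h : ℝ) (ω : Fin d → ℝ) (ψ₁ φ : ℝ → ℝ)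
    (g : EuclideanSpace ℂ (Fin d) → EuclideanSpace ℂ (Fin d))
    (q p : EuclideanSpace ℂ (Fin d)) : ℝ :=
  (1 / 2) * ‖dOp ω q‖ ^ 2 + (1 / 2) * ‖p‖ ^ 2
    - (1 / 2) * (inner (𝕜 := ℂ) (dOp (fun i => Real.cos (h * ω i)) (dOp (fun i => φ (h * ω i)) q))
        (g (dOp (fun i => φ (h * ω i)) q))).re
    - (1 / 8) * h ^ 2 * ‖dOp (fun i => ψ₁ (h * ω i)) (g (dOp (fun i => φ (h * ω i)) q))‖ ^ 2

open RealInnerProductSpace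

theorem mul_sinc (x : ℝ) : x * sinc x = Real.sin x := by
  unfold sinc
  split_ifs with hx
  · simp [hx]
  · field_simp

section Mode

variable {E : Type*} [NormedAddCommGroup E] [InnerProductSpace ℝ E]

noncomputable def modeEnergy (h ω c ψ φ : ℝ) (a b G : E) : ℝ :=
  1 / 2 * ω ^ 2 * ‖a‖ ^ 2 + 1 / 2 * ‖b‖ ^ 2 - 1 / 2 * (c * φ) * ⟪a, G⟫
    - 1 / 8 * h ^ 2 * ψ ^ 2 * ‖G‖ ^ 2

theorem modeEnergy_step {h ω c s σ ψ φ : ℝ} (hcs : c ^ 2 + s ^ 2 = 1) (hs : s = h * ω * σ)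
    (hψ : ψ = σ * φ) {a b a' b' G K : E}
    (ha : a' = c • a + h • σ • b + (h ^ 2 / 2) • σ • ψ • G)
    (hb : b' = -((ω * s) • a) + c • b + (h / 2) • (c • ψ • G + ψ • K)) :
    modeEnergy h ω c ψ φ a' b' K + 1 / 2 * (φ * ⟪a, K⟫)
      = modeEnergy h ω c ψ φ a b G + 1 / 2 * (φ * ⟪a', G⟫) := by
  subst ha hb hs hψ
  simp only [modeEnergy, ← real_inner_self_eq_norm_sq, inner_add_left, inner_add_right,
    inner_neg_left, inner_neg_right, real_inner_smul_left, real_inner_smul_right]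
  rw [real_inner_comm a b, real_inner_comm a G, real_inner_comm b G, real_inner_comm a K,
    real_inner_comm b K, real_inner_comm G K]
  linear_combination (1 / 2 * ⟪b, b⟫ - 1 / 2 * φ * ⟪a, K⟫ + 1 / 2 * ω ^ 2 * ⟪a, a⟫
    + 1 / 2 * h * σ * φ * ⟪b, G⟫ + 1 / 8 * h ^ 2 * σ ^ 2 * φ ^ 2 * ⟪G, G⟫) * hcs

end Mode

section DiagonalAction

variable {d : ℕ}

theorem dOp_apply (f : Fin d → ℝ) (q : EuclideanSpace ℂ (Fin d)) (i : Fin d) :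
    dOp f q i = f i • q i :=
  (Complex.real_smul).symm

theorem EuclideanSpace.re_inner_eq_sum {ι : Type*} [Fintype ι] (x y : EuclideanSpace ℂ ι) :
    (inner (𝕜 := ℂ) x y).re = ∑ i, ⟪x i, y i⟫ := by
  rw [PiLp.inner_apply, Complex.re_sum]
  rfl

theorem re_inner_dOp_left (f : Fin d → ℝ) (x y : EuclideanSpace ℂ (Fin d)) :
    (inner (𝕜 := ℂ) (dOp f x) y).re = ∑ i, f i * ⟪x i, y i⟫ := by
  simp only [EuclideanSpace.re_inner_eq_sum, dOp_apply, real_inner_smul_left]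

theorem norm_dOp_sq (f : Fin d → ℝ) (x : EuclideanSpace ℂ (Fin d)) :
    ‖dOp f x‖ ^ 2 = ∑ i, f i ^ 2 * ‖x i‖ ^ 2 := by
  simp only [EuclideanSpace.norm_sq_eq, dOp_apply, norm_smul, mul_pow, Real.norm_eq_abs, sq_abs]

theorem modEnergyG_eq_sum (h : ℝ) (ω : Fin d → ℝ) (ψ₁ φ : ℝ → ℝ)
    (g : EuclideanSpace ℂ (Fin d) → EuclideanSpace ℂ (Fin d)) (q p : EuclideanSpace ℂ (Fin d)) :
    modEnergyG h ω ψ₁ φ g q p = ∑ i, modeEnergy h (ω i) (Real.cos (h * ω i)) (ψ₁ (h * ω i))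
      (φ (h * ω i)) (q i) (p i) (g (dOp (fun j => φ (h * ω j)) q) i) := by
  simp only [modEnergyG, norm_dOp_sq, re_inner_dOp_left]
  simp only [modeEnergy, EuclideanSpace.norm_sq_eq, dOp_apply, real_inner_smul_left,
    Finset.mul_sum, ← Finset.sum_add_distrib, ← Finset.sum_sub_distrib]
  refine Finset.sum_congr rfl fun i _ => ?_
  ring

end DiagonalAction

theorem modified_energy_identity_general_general {d : ℕ} (h : ℝ)
    (ω : Fin d → ℝ) (ψ₁ φ : ℝ → ℝ)
    (hfilter : ∀ ξ : ℝ, ψ₁ ξ = sinc ξ * φ ξ)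
    (g : EuclideanSpace ℂ (Fin d) → EuclideanSpace ℂ (Fin d))
    (qn pn qnext pnext : EuclideanSpace ℂ (Fin d))
    (hstepq : qnext = dOp (fun i => Real.cos (h * ω i)) qn
        + h • dOp (fun i => sinc (h * ω i)) pn
        + (h ^ 2 / 2) • dOp (fun i => sinc (h * ω i))
            (dOp (fun i => ψ₁ (h * ω i)) (g (dOp (fun i => φ (h * ω i)) qn))))
    (hstepp : pnext = -(dOp (fun i => ω i * Real.sin (h * ω i)) qn)
        + dOp (fun i => Real.cos (h * ω i)) pn
        + (h / 2) • (dOp (fun i => Real.cos (h * ω i))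
              (dOp (fun i => ψ₁ (h * ω i)) (g (dOp (fun i => φ (h * ω i)) qn)))
            + dOp (fun i => ψ₁ (h * ω i)) (g (dOp (fun i => φ (h * ω i)) qnext)))) :
    modEnergyG h ω ψ₁ φ g qnext pnext
        + (1 / 2) * (inner (𝕜 := ℂ) (dOp (fun i => φ (h * ω i)) qn)
            (g (dOp (fun i => φ (h * ω i)) qnext))).re
      = modEnergyG h ω ψ₁ φ g qn pn
        + (1 / 2) * (inner (𝕜 := ℂ) (dOp (fun i => φ (h * ω i)) qnext)
            (g (dOp (fun i => φ (h * ω i)) qn))).re := by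
  simp only [modEnergyG_eq_sum, re_inner_dOp_left, Finset.mul_sum, ← Finset.sum_add_distrib]
  refine Finset.sum_congr rfl fun i _ => ?_
  refine modeEnergy_step (E := ℂ) (Real.cos_sq_add_sin_sq _) (mul_sinc (h * ω i)).symm
    (hfilter _) ?_ ?_
  · simpa only [PiLp.add_apply, PiLp.smul_apply, dOp_apply] using congr($hstepq i)
  · simpa only [PiLp.add_apply, PiLp.neg_apply, PiLp.smul_apply, dOp_apply] using congr($hstepp i)

/-- for a general force `g` and filters with `ψ₁ = sinc·φ`, one step of the
trigonometric integrator satisfies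
`ℋ(q_{n+1},q̇_{n+1}) + ½Re((Φq_n)* g(Φq_{n+1})) = ℋ(q_n,q̇_n) + ½Re((Φq_{n+1})* g(Φq_n))`. -/
theorem modified_energy_identity_general {d : ℕ} (h : ℝ) (hh : 0 < h)
    (ω : Fin d → ℝ) (hω : ∀ i, 0 ≤ ω i) (ψ₁ φ : ℝ → ℝ)
    (hfilter : ∀ ξ : ℝ, ψ₁ ξ = sinc ξ * φ ξ)
    (g : EuclideanSpace ℂ (Fin d) → EuclideanSpace ℂ (Fin d))
    (qn pn qnext pnext : EuclideanSpace ℂ (Fin d))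
    (hstepq : qnext = dOp (fun i => Real.cos (h * ω i)) qn
        + h • dOp (fun i => sinc (h * ω i)) pn
        + (h ^ 2 / 2) • dOp (fun i => sinc (h * ω i))
            (dOp (fun i => ψ₁ (h * ω i)) (g (dOp (fun i => φ (h * ω i)) qn))))
    (hstepp : pnext = -(dOp (fun i => ω i * Real.sin (h * ω i)) qn)
        + dOp (fun i => Real.cos (h * ω i)) pn
        + (h / 2) • (dOp (fun i => Real.cos (h * ω i))
              (dOp (fun i => ψ₁ (h * ω i)) (g (dOp (fun i => φ (h * ω i)) qn)))
            + dOp (fun i => ψ₁ (h * ω i)) (g (dOp (fun i => φ (h * ω i)) qnext)))) :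
    modEnergyG h ω ψ₁ φ g qnext pnext
        + (1 / 2) * (inner (𝕜 := ℂ) (dOp (fun i => φ (h * ω i)) qn)
            (g (dOp (fun i => φ (h * ω i)) qnext))).re
      = modEnergyG h ω ψ₁ φ g qn pn
        + (1 / 2) * (inner (𝕜 := ℂ) (dOp (fun i => φ (h * ω i)) qnext)
            (g (dOp (fun i => φ (h * ω i)) qn))).re :=
  modified_energy_identity_general_general h ω ψ₁ φ hfilter g qn pn qnext pnext hstepq hstepp
end

section
/- (Operator norm of the collocation matrix for the wave equation.) Let V ∈ H¹(𝕋) be a 2π-periodic real-valued function with Fourier coefficients (V_j)_{j∈ℤ}, and for K ≥ 1 define the (2K)×(2K) matrix A = (a_{jl})_{j,l=-K}^{K-1} with a_{jl} = Σ_{m∈ℤ} V_{j−l+2Km}. Then A is self-adjoint, and there is an absolute constant c₂, independent of K and V, such that the operator norm satisfies ‖A‖ ≤ c₂ ‖V‖_{H¹(𝕋)}. -/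
open scoped BigOperators

/-- The `2K × 2K` collocation matrix of a `2π`-periodic potential with Fourier
coefficients `Vc : ℤ → ℂ`: `a_{jl} = Σ_{m∈ℤ} V_{j−l+2Km}`, indices running over
`j, l ∈ {-K, …, K-1}` (realized as `Fin (2K)` shifted by `-K`). -/
noncomputable def collocationMatrix (K : ℕ) (Vc : ℤ → ℂ) :
    Matrix (Fin (2 * K)) (Fin (2 * K)) ℂ := fun j l =>
  ∑' m : ℤ, Vc (((j : ℤ) - K) - ((l : ℤ) - K) + 2 * K * m)

/-- The squared `H¹(𝕋)`-norm of the potential in terms of its Fourier coefficients. -/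
noncomputable def H1normSq (Vc : ℤ → ℂ) : ℝ := ∑' j : ℤ, (1 + (j : ℝ) ^ 2) * ‖Vc j‖ ^ 2

/-- Summability of `1/(1+n²)` over `ℤ`. -/
lemma summable_inv_one_add_sq : Summable (fun n : ℤ => 1 / (1 + (n : ℝ) ^ 2)) := by
  have hnat : Summable (fun n : ℕ => 1 / (1 + (n : ℝ) ^ 2)) := by
    have h1 : Summable (fun n : ℕ => 1 / ((n : ℝ)) ^ 2) :=
      Real.summable_one_div_nat_pow.mpr one_lt_two
    have h2 : Summable (fun n : ℕ => 1 / (((n : ℝ)) + 1) ^ 2) := by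
      have := (summable_nat_add_iff (f := fun n : ℕ => 1 / ((n : ℝ)) ^ 2) 1).mpr h1
      simpa [Nat.cast_add] using this
    have h3 : Summable (fun n : ℕ => 2 * (1 / (((n : ℝ)) + 1) ^ 2)) := h2.mul_left 2
    refine Summable.of_nonneg_of_le (fun n => by positivity) (fun n => ?_) h3
    rw [mul_one_div, div_le_div_iff₀ (by positivity) (by positivity)]
    nlinarith [sq_nonneg ((n : ℝ) - 1)]
  refine Summable.of_nat_of_neg (by simpa using hnat) ?_
  simpa using hnat

/-- From summability of the weighted squares we get `ℓ¹` summability. -/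
lemma summable_norm_of_H1 (Vc : ℤ → ℂ)
    (hsum : Summable (fun j : ℤ => (1 + (j : ℝ) ^ 2) * ‖Vc j‖ ^ 2)) :
    Summable (fun j : ℤ => ‖Vc j‖) := by
  refine Summable.of_nonneg_of_le (fun j => norm_nonneg _) (fun j => ?_)
    (summable_inv_one_add_sq.add hsum)
  have ht : (0 : ℝ) < 1 + (j : ℝ) ^ 2 := by positivity
  by_cases h : ‖Vc j‖ ≤ 1 / (1 + (j : ℝ) ^ 2)
  · exact h.trans (le_add_of_nonneg_right (by positivity))
  · push_neg at h
    rw [div_lt_iff₀ ht] at h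
    have h2 : ‖Vc j‖ ≤ (1 + (j : ℝ) ^ 2) * ‖Vc j‖ ^ 2 := by
      nlinarith [norm_nonneg (Vc j)]
    exact h2.trans (le_add_of_nonneg_left (by positivity))

/-- Cancellation modulo `2K`. -/
lemma int_aux {K : ℕ} (hK : 1 ≤ K) {a b m m' : ℤ}
    (hab : |a - b| < 2 * K) (h : a + 2 * K * m = b + 2 * K * m') : a = b ∧ m = m' := by
  have h1 : a - b = 2 * (K : ℤ) * (m' - m) := by ring_nf; linarith
  by_cases hm : m = m'
  · subst hm; constructor
    · have : a - b = 0 := by rw [h1]; ring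
      linarith
    · rfl
  · exfalso
    have h2 : (1 : ℤ) ≤ |m' - m| := Int.one_le_abs (sub_ne_zero.2 (Ne.symm hm))
    have h3 : (2 * K : ℤ) ≤ |a - b| := by
      rw [h1, abs_mul, abs_of_nonneg (show (0:ℤ) ≤ 2 * (K:ℤ) by positivity)]
      nlinarith
    linarith

lemma inj_m {K : ℕ} (hK : 1 ≤ K) (d : ℤ) :
    Function.Injective (fun m : ℤ => d + 2 * (K : ℤ) * m) := by
  intro m m' h
  simp only at h
  have hK' : (0 : ℤ) < 2 * K := by
    have : (1 : ℤ) ≤ (K : ℤ) := by exact_mod_cast hK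
    linarith
  have h2 : (2 * (K : ℤ)) * m = 2 * K * m' := by linarith
  exact mul_left_cancel₀ hK'.ne' h2

lemma inj_row {K : ℕ} (hK : 1 ≤ K) (j : Fin (2 * K)) :
    Function.Injective (fun p : Fin (2 * K) × ℤ =>
      ((j : ℤ) - K) - ((p.1 : ℤ) - K) + 2 * K * p.2) := by
  rintro ⟨l, m⟩ ⟨l', m'⟩ h
  simp only at h
  have hl := l.isLt
  have hl' := l'.isLt
  have hab : |(((j : ℤ) - K) - ((l : ℤ) - K)) - (((j : ℤ) - K) - ((l' : ℤ) - K))| < 2 * K := by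
    rw [abs_lt]; constructor <;> push_cast <;> omega
  obtain ⟨h1, h2⟩ := int_aux hK hab h
  have : (l : ℤ) = (l' : ℤ) := by omega
  have hll : l = l' := by
    apply Fin.ext; exact_mod_cast this
  exact Prod.ext hll h2

lemma inj_col {K : ℕ} (hK : 1 ≤ K) (l : Fin (2 * K)) :
    Function.Injective (fun p : Fin (2 * K) × ℤ =>
      ((p.1 : ℤ) - K) - ((l : ℤ) - K) + 2 * K * p.2) := by
  rintro ⟨j, m⟩ ⟨j', m'⟩ h
  simp only at h
  have hj := j.isLt
  have hj' := j'.isLt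
  have hab : |(((j : ℤ) - K) - ((l : ℤ) - K)) - (((j' : ℤ) - K) - ((l : ℤ) - K))| < 2 * K := by
    rw [abs_lt]; constructor <;> push_cast <;> omega
  obtain ⟨h1, h2⟩ := int_aux hK hab h
  have : (j : ℤ) = (j' : ℤ) := by omega
  have hjj : j = j' := by
    apply Fin.ext; exact_mod_cast this
  exact Prod.ext hjj h2

/-- A finite sum over rows (or columns) of tsums over an injectively parametrized family
of integer indices is bounded by the full `ℓ¹` norm. -/
lemma sum_tsum_le {K : ℕ} (Vc : ℤ → ℂ)
    (hs : Summable (fun n : ℤ => ‖Vc n‖))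
    (e : Fin (2 * K) × ℤ → ℤ) (he : Function.Injective e) :
    ∑ i : Fin (2 * K), ∑' m : ℤ, ‖Vc (e (i, m))‖ ≤ ∑' n : ℤ, ‖Vc n‖ := by
  have hsum : Summable (fun p : Fin (2 * K) × ℤ => ‖Vc (e p)‖) := hs.comp_injective he
  calc ∑ i : Fin (2 * K), ∑' m : ℤ, ‖Vc (e (i, m))‖
      = ∑' i : Fin (2 * K), ∑' m : ℤ, ‖Vc (e (i, m))‖ := (tsum_fintype _).symm
    _ = ∑' p : Fin (2 * K) × ℤ, ‖Vc (e p)‖ := (Summable.tsum_prod' hsum hsum.prod_factor).symm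
    _ ≤ ∑' n : ℤ, ‖Vc n‖ :=
        Summable.tsum_le_tsum_of_inj e he (fun _ _ => norm_nonneg _) (fun p => le_rfl) hsum hs

set_option maxHeartbeats 1000000 in
/-- Lemma 4: the collocation matrix is self-adjoint and there is an absolute
constant `c₂`, independent of `K` and `V`, with `‖A‖ ≤ c₂ ‖V‖_{H¹(𝕋)}` in the Euclidean
operator norm. -/
theorem collocation_matrix_norm_bound :
    ∃ c₂ : ℝ, 0 < c₂ ∧
      ∀ (K : ℕ), 1 ≤ K →
      ∀ Vc : ℤ → ℂ,
        (∀ j : ℤ, Vc (-j) = (starRingEnd ℂ) (Vc j)) →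
        Summable (fun j : ℤ => (1 + (j : ℝ) ^ 2) * ‖Vc j‖ ^ 2) →
        (collocationMatrix K Vc).IsHermitian ∧
        ‖Matrix.toEuclideanCLM (𝕜 := ℂ) (collocationMatrix K Vc)‖
          ≤ c₂ * Real.sqrt (H1normSq Vc) := by
  classical
  set C : ℝ := ∑' n : ℤ, 1 / (1 + (n : ℝ) ^ 2) with hCdef
  have hCsum := summable_inv_one_add_sq
  have hC1 : (1 : ℝ) ≤ C := by
    have h := Summable.le_tsum hCsum 0 (fun j _ => by positivity)
    rw [hCdef]
    simpa [one_div] using h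
  have hC0 : (0 : ℝ) ≤ C := by linarith
  refine ⟨Real.sqrt C, Real.sqrt_pos.2 (by linarith), ?_⟩
  intro K hK Vc hV hsum
  have hs1 : Summable (fun n : ℤ => ‖Vc n‖) := summable_norm_of_H1 Vc hsum
  set A := collocationMatrix K Vc with hA
  set R : ℝ := ∑' n : ℤ, ‖Vc n‖ with hRdef
  have hR0 : (0 : ℝ) ≤ R := tsum_nonneg (fun n => norm_nonneg _)
  have hH0 : (0 : ℝ) ≤ H1normSq Vc := tsum_nonneg (fun j => by positivity)
  -- Hermitian
  have herm : A.IsHermitian := by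
    ext j l
    simp only [Matrix.conjTranspose_apply, hA, collocationMatrix]
    calc star (∑' m : ℤ, Vc (((l : ℤ) - K) - ((j : ℤ) - K) + 2 * K * m))
        = ∑' m : ℤ, star (Vc (((l : ℤ) - K) - ((j : ℤ) - K) + 2 * K * m)) := tsum_star
      _ = ∑' m : ℤ, Vc (((j : ℤ) - K) - ((l : ℤ) - K) + 2 * K * (-m)) := by
          refine tsum_congr fun m => ?_
          calc star (Vc (((l : ℤ) - K) - ((j : ℤ) - K) + 2 * K * m))
              = (starRingEnd ℂ) (Vc (((l : ℤ) - K) - ((j : ℤ) - K) + 2 * K * m)) := rfl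
            _ = Vc (-(((l : ℤ) - K) - ((j : ℤ) - K) + 2 * K * m)) := (hV _).symm
            _ = Vc (((j : ℤ) - K) - ((l : ℤ) - K) + 2 * K * (-m)) := by congr 1; ring
      _ = ∑' m : ℤ, Vc (((j : ℤ) - K) - ((l : ℤ) - K) + 2 * K * m) :=
          (Equiv.neg ℤ).tsum_eq (fun m => Vc (((j : ℤ) - K) - ((l : ℤ) - K) + 2 * K * m))
  refine ⟨herm, ?_⟩
  -- entrywise bounds
  set B : Fin (2 * K) → Fin (2 * K) → ℝ := fun j l =>
    ∑' m : ℤ, ‖Vc (((j : ℤ) - K) - ((l : ℤ) - K) + 2 * K * m)‖ with hBdef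
  have hBsum : ∀ j l : Fin (2 * K),
      Summable (fun m : ℤ => ‖Vc (((j : ℤ) - K) - ((l : ℤ) - K) + 2 * K * m)‖) :=
    fun j l => hs1.comp_injective (inj_m hK _)
  have hB0 : ∀ j l, 0 ≤ B j l := fun j l => tsum_nonneg (fun m => norm_nonneg _)
  have hEntry : ∀ j l, ‖A j l‖ ≤ B j l := by
    intro j l
    rw [hA, hBdef]
    show ‖∑' m : ℤ, Vc (((j : ℤ) - K) - ((l : ℤ) - K) + 2 * K * m)‖
        ≤ ∑' m : ℤ, ‖Vc (((j : ℤ) - K) - ((l : ℤ) - K) + 2 * K * m)‖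
    exact norm_tsum_le_tsum_norm (hBsum j l)
  have hRow : ∀ j, ∑ l, B j l ≤ R := by
    intro j
    have h := sum_tsum_le (K := K) Vc hs1
      (fun p => ((j : ℤ) - K) - ((p.1 : ℤ) - K) + 2 * K * p.2) (inj_row hK j)
    rw [hBdef, hRdef]
    simpa using h
  have hCol : ∀ l, ∑ j, B j l ≤ R := by
    intro l
    have h := sum_tsum_le (K := K) Vc hs1
      (fun p => ((p.1 : ℤ) - K) - ((l : ℤ) - K) + 2 * K * p.2) (inj_col hK l)
    rw [hBdef, hRdef]
    simpa using h
  -- operator norm ≤ R by the Schur test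
  have hTR : ‖Matrix.toEuclideanCLM (𝕜 := ℂ) A‖ ≤ R := by
    refine ContinuousLinearMap.opNorm_le_bound _ hR0 (fun x => ?_)
    have hTx : ∀ j, (Matrix.toEuclideanCLM (𝕜 := ℂ) A x) j = ∑ l, A j l * x l := by
      intro j
      have h := congrFun (Matrix.ofLp_toEuclideanCLM (𝕜 := ℂ) A x) j
      simpa [Matrix.toLin'_apply, Matrix.mulVec, dotProduct] using h
    have key : ∑ j, ‖∑ l, A j l * x l‖ ^ 2 ≤ R ^ 2 * ∑ l, ‖x l‖ ^ 2 := by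
      have step1 : ∀ j, ‖∑ l, A j l * x l‖ ≤ ∑ l, B j l * ‖x l‖ := by
        intro j
        refine (norm_sum_le _ _).trans (Finset.sum_le_sum fun l _ => ?_)
        rw [norm_mul]
        exact mul_le_mul_of_nonneg_right (hEntry j l) (norm_nonneg _)
      have step2 : ∀ j, (∑ l, B j l * ‖x l‖) ^ 2 ≤ R * ∑ l, B j l * ‖x l‖ ^ 2 := by
        intro j
        have cs := Finset.sum_mul_sq_le_sq_mul_sq Finset.univ
          (fun l => Real.sqrt (B j l)) (fun l => Real.sqrt (B j l) * ‖x l‖)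
        have e1 : ∀ l, Real.sqrt (B j l) * (Real.sqrt (B j l) * ‖x l‖) = B j l * ‖x l‖ := by
          intro l
          rw [← mul_assoc, Real.mul_self_sqrt (hB0 j l)]
        have e2 : ∀ l, (Real.sqrt (B j l)) ^ 2 = B j l := fun l => Real.sq_sqrt (hB0 j l)
        have e3 : ∀ l, (Real.sqrt (B j l) * ‖x l‖) ^ 2 = B j l * ‖x l‖ ^ 2 := by
          intro l
          rw [mul_pow, Real.sq_sqrt (hB0 j l)]
        simp only [e1, e2, e3] at cs
        refine cs.trans ?_
        exact mul_le_mul_of_nonneg_right (hRow j)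
          (Finset.sum_nonneg fun l _ => mul_nonneg (hB0 j l) (by positivity))
      have step3 : ∑ j, ‖∑ l, A j l * x l‖ ^ 2 ≤ R * ∑ j, ∑ l, B j l * ‖x l‖ ^ 2 := by
        rw [Finset.mul_sum]
        refine Finset.sum_le_sum fun j _ => ?_
        exact (pow_le_pow_left₀ (norm_nonneg _) (step1 j) 2).trans (step2 j)
      have step4 : ∑ j, ∑ l, B j l * ‖x l‖ ^ 2 ≤ R * ∑ l, ‖x l‖ ^ 2 := by
        rw [Finset.sum_comm]
        calc ∑ l, ∑ j, B j l * ‖x l‖ ^ 2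
            = ∑ l, (∑ j, B j l) * ‖x l‖ ^ 2 := by
              refine Finset.sum_congr rfl fun l _ => ?_
              rw [Finset.sum_mul]
          _ ≤ ∑ l, R * ‖x l‖ ^ 2 := Finset.sum_le_sum fun l _ =>
              mul_le_mul_of_nonneg_right (hCol l) (by positivity)

          _ = R * ∑ l, ‖x l‖ ^ 2 := (Finset.mul_sum _ _ _).symm
      calc ∑ j, ‖∑ l, A j l * x l‖ ^ 2
          ≤ R * ∑ j, ∑ l, B j l * ‖x l‖ ^ 2 := step3
        _ ≤ R * (R * ∑ l, ‖x l‖ ^ 2) := mul_le_mul_of_nonneg_left step4 hR0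
        _ = R ^ 2 * ∑ l, ‖x l‖ ^ 2 := by ring
    have hnx : ‖x‖ = Real.sqrt (∑ l, ‖x l‖ ^ 2) := by
      rw [EuclideanSpace.norm_eq]
    have hnTx : ‖Matrix.toEuclideanCLM (𝕜 := ℂ) A x‖
        = Real.sqrt (∑ j, ‖∑ l, A j l * x l‖ ^ 2) := by
      rw [EuclideanSpace.norm_eq]
      exact congrArg Real.sqrt (Finset.sum_congr rfl fun j _ => by rw [hTx j])
    rw [hnTx, hnx]
    calc Real.sqrt (∑ j, ‖∑ l, A j l * x l‖ ^ 2)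
        ≤ Real.sqrt (R ^ 2 * ∑ l, ‖x l‖ ^ 2) := Real.sqrt_le_sqrt key
      _ = R * Real.sqrt (∑ l, ‖x l‖ ^ 2) := by
          rw [Real.sqrt_mul (by positivity), Real.sqrt_sq hR0]
  -- ℓ¹ norm ≤ √C * √H by Cauchy–Schwarz
  have hRC : R ≤ Real.sqrt C * Real.sqrt (H1normSq Vc) := by
    refine Summable.tsum_le_of_sum_le hs1 fun s => ?_
    have cs := Finset.sum_mul_sq_le_sq_mul_sq s
      (fun n => Real.sqrt (1 / (1 + (n : ℝ) ^ 2)))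
      (fun n => Real.sqrt (1 + (n : ℝ) ^ 2) * ‖Vc n‖)
    have e1 : ∀ n : ℤ, Real.sqrt (1 / (1 + (n : ℝ) ^ 2)) *
        (Real.sqrt (1 + (n : ℝ) ^ 2) * ‖Vc n‖) = ‖Vc n‖ := by
      intro n
      rw [← mul_assoc, ← Real.sqrt_mul (by positivity),
        one_div_mul_cancel (by positivity), Real.sqrt_one, one_mul]
    have e2 : ∀ n : ℤ, (Real.sqrt (1 / (1 + (n : ℝ) ^ 2))) ^ 2 = 1 / (1 + (n : ℝ) ^ 2) :=
      fun n => Real.sq_sqrt (by positivity)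
    have e3 : ∀ n : ℤ, (Real.sqrt (1 + (n : ℝ) ^ 2) * ‖Vc n‖) ^ 2
        = (1 + (n : ℝ) ^ 2) * ‖Vc n‖ ^ 2 := by
      intro n
      rw [mul_pow, Real.sq_sqrt (by positivity)]
    simp only [e1, e2, e3] at cs
    have h1 : ∑ n ∈ s, 1 / (1 + (n : ℝ) ^ 2) ≤ C :=
      Summable.sum_le_tsum s (fun n _ => by positivity) hCsum
    have h2 : ∑ n ∈ s, (1 + (n : ℝ) ^ 2) * ‖Vc n‖ ^ 2 ≤ H1normSq Vc :=
      Summable.sum_le_tsum s (fun n _ => by positivity) hsum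
    have hfin : (∑ n ∈ s, ‖Vc n‖) ^ 2 ≤ C * H1normSq Vc := by
      refine cs.trans ?_
      exact mul_le_mul h1 h2
        (Finset.sum_nonneg fun n _ => mul_nonneg (by positivity) (sq_nonneg ‖Vc n‖)) hC0
    rw [← Real.sqrt_mul hC0]
    exact (Real.le_sqrt (Finset.sum_nonneg fun n _ => norm_nonneg _)
      (by positivity)).2 hfin
  exact hTR.trans hRC
end
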